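/- arXiv:2006.06957 — 4 statements merged into one kernel-verified Lean document; each statement's English description precedes it below -/
import Mathlib

section
/- Let S = {x ∈ {0,1}^n : Ax ≥ b} have finite integrality gap g with respect to its LP relaxation P = {x ∈ [0,1]^n : Ax ≥ b}, and let x̃ ∈ {0,1}^n lie in the dominant of P. Then there exists x̄ ∈ S with x̄ ≤ x̃ coordinatewise. -/
/-- DomToIP correctness (Lemma domlemma). If the binary IP has finite
integrality gap `g` (Carr–Vempala property) and `x̃ ∈ {0,1}ⁿ` lies in the dominant of the
LP relaxation `P`, then there is a feasible integer solution `x̄ ∈ S` with `x̄ ≤ x̃`. -/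
theorem stmt7 {m n : ℕ} (A : Matrix (Fin m) (Fin n) ℝ) (b : Fin m → ℝ)
    (S P : Set (Fin n → ℝ))
    (hS : S = {x | (∀ i, x i = 0 ∨ x i = 1) ∧ ∀ j, b j ≤ A.mulVec x j})
    (hP : P = {x | (∀ i, 0 ≤ x i ∧ x i ≤ 1) ∧ ∀ j, b j ≤ A.mulVec x j})
    (g : ℝ) (hg : 1 ≤ g)
    (hCV : ∀ x ∈ P, ∃ (k : ℕ) (θ : Fin k → ℝ) (z : Fin k → Fin n → ℝ),
      (∀ i, 0 ≤ θ i) ∧ (∑ i, θ i = 1) ∧ (∀ i, z i ∈ S) ∧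
      (∀ j, ∑ i, θ i * z i j ≤ g * x j))
    (xt : Fin n → ℝ)
    (hxtbin : ∀ i, xt i = 0 ∨ xt i = 1)
    (hxtdom : ∃ y ∈ P, ∀ j, y j ≤ xt j) :
    ∃ xb ∈ S, ∀ j, xb j ≤ xt j := by
  obtain ⟨y, hyP, hyle⟩ := hxtdom
  obtain ⟨k, θ, z, hθ, hsum, hzS, hdom⟩ := hCV y hyP
  have hy0 : ∀ i, 0 ≤ y i := fun i => ((hP ▸ hyP).1 i).1
  have hzbin : ∀ i j, z i j = 0 ∨ z i j = 1 := fun i j => (hS ▸ hzS i).1 j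
  have hz0 : ∀ i j, 0 ≤ z i j := by
    intro i j; rcases hzbin i j with h | h <;> simp [h]
  obtain ⟨i0, hi0⟩ : ∃ i, 0 < θ i := by
    by_contra h
    push_neg at h
    have : ∑ i, θ i ≤ 0 := Finset.sum_nonpos fun i _ => h i
    linarith
  refine ⟨z i0, hzS i0, fun j => ?_⟩
  rcases hxtbin j with hxt | hxt
  · -- xt j = 0, hence y j = 0, hence z i0 j = 0
    have hyj : y j = 0 := le_antisymm (hxt ▸ hyle j) (hy0 j)
    have hle : ∑ i, θ i * z i j ≤ 0 := by
      have := hdom j; rw [hyj] at this; simpa using this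
    have hge : (0:ℝ) ≤ ∑ i, θ i * z i j :=
      Finset.sum_nonneg fun i _ => mul_nonneg (hθ i) (hz0 i j)
    have heq : ∑ i, θ i * z i j = 0 := le_antisymm hle hge
    have hterm : θ i0 * z i0 j = 0 :=
      (Finset.sum_eq_zero_iff_of_nonneg fun i _ =>
        mul_nonneg (hθ i) (hz0 i j)).mp heq i0 (Finset.mem_univ i0)
    have : z i0 j = 0 := by
      rcases mul_eq_zero.mp hterm with h | h
      · exact absurd h (ne_of_gt hi0)
      · exact h
    rw [this, hxt]
  · rw [hxt]
    rcases hzbin i0 j with h | h <;> simp [h]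
end

section
/- Let G = (V,E) be a graph and x a point of the subtour-elimination polytope: x(δ(U)) ≥ 2 for all ∅ ⊊ U ⊊ V and 0 ≤ x ≤ 2. If every coordinate of x satisfies x_e = 0 or x_e ≥ 1, then the coordinatewise floor ⌊x⌋ also satisfies all subtour constraints: ⌊x⌋(δ(U)) ≥ 2 for every proper nonempty vertex subset U. -/
/-- The set of edges of a multigraph (edge type `E` with endpoint map `ends`) crossing
the vertex cut defined by `U`. -/
def cutEdges {V E : Type*} [Fintype E] [DecidableEq V] (ends : E → V × V)
    (U : Finset V) : Finset E :=
  Finset.univ.filter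
    (fun e => ((ends e).1 ∈ U ∧ (ends e).2 ∉ U) ∨ ((ends e).1 ∉ U ∧ (ends e).2 ∈ U))

/-- If `x` is in the subtour-elimination polytope and every coordinate is
`0` or `≥ 1`, then the coordinatewise floor `⌊x⌋` still satisfies every subtour cut
constraint. -/
theorem stmt9 {V E : Type*} [Fintype V] [Fintype E] [DecidableEq V]
    (ends : E → V × V) (x : E → ℝ)
    (hbox : ∀ e, 0 ≤ x e ∧ x e ≤ 2)
    (hsub : ∀ U : Finset V, U.Nonempty → U ≠ Finset.univ →
      2 ≤ ∑ e ∈ cutEdges ends U, x e)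
    (hint : ∀ e, x e = 0 ∨ 1 ≤ x e) :
    ∀ U : Finset V, U.Nonempty → U ≠ Finset.univ →
      2 ≤ ∑ e ∈ cutEdges ends U, (⌊x e⌋ : ℝ) := by
  classical
  intro U hU hU'
  set C := cutEdges ends U with hC
  have h2 := hsub U hU hU'
  set S := C.filter (fun e => 1 ≤ x e) with hS
  -- sum of x over C equals sum over S
  have hx0 : ∀ e ∈ C.filter (fun e => ¬ 1 ≤ x e), x e = 0 := by
    intro e he
    rcases hint e with h | h
    · exact h
    · exact absurd h (Finset.mem_filter.mp he).2
  have hsumx : ∑ e ∈ C, x e = ∑ e ∈ S, x e := by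
    rw [← Finset.sum_filter_add_sum_filter_not C (fun e => 1 ≤ x e),
      Finset.sum_eq_zero hx0, add_zero]
  have hsumf : ∑ e ∈ C, (⌊x e⌋ : ℝ) = ∑ e ∈ S, (⌊x e⌋ : ℝ) := by
    rw [← Finset.sum_filter_add_sum_filter_not C (fun e => 1 ≤ x e)]
    have : ∑ e ∈ C.filter (fun e => ¬ 1 ≤ x e), (⌊x e⌋ : ℝ) = 0 := by
      apply Finset.sum_eq_zero
      intro e he
      rw [hx0 e he]; norm_num
    rw [this, add_zero]
  rw [hsumf]
  rcases lt_trichotomy S.card 1 with h1 | h1 | h1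
  · -- S empty: contradiction
    interval_cases h : S.card
    rw [hsumx, Finset.card_eq_zero.mp h, Finset.sum_empty] at h2
    norm_num at h2
  · -- exactly one edge: it has x e = 2
    obtain ⟨e, he⟩ := Finset.card_eq_one.mp h1
    rw [hsumx, he, Finset.sum_singleton] at h2
    have hle := (hbox e).2
    have : x e = 2 := le_antisymm hle h2
    rw [he, Finset.sum_singleton, this]
    norm_num
  · -- at least two edges
    have : ∀ e ∈ S, (1 : ℝ) ≤ (⌊x e⌋ : ℝ) := by
      intro e he
      have h := (Finset.mem_filter.mp he).2
      have : (1 : ℤ) ≤ ⌊x e⌋ := by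
        exact_mod_cast Int.le_floor.mpr (by exact_mod_cast h)
      exact_mod_cast this
    calc (2 : ℝ) ≤ S.card := by exact_mod_cast h1
      _ = ∑ _e ∈ S, (1 : ℝ) := by simp
      _ ≤ ∑ e ∈ S, (⌊x e⌋ : ℝ) := Finset.sum_le_sum this
end

section
/- Let S ⊆ {0,1}^n nonempty, P ⊆ [0,1]^n convex with finite integrality gap g, and x' ∈ dom(P) with x'_ℓ < 1. In the branching LP (maximize λ_0 + λ_1 subject to x^j ∈ λ_j·P for j = 0,1, x^0_ℓ = 0, x^1_ℓ = λ_1, x^0 + x^1 ≤ x'), the optimal value is at least 1/g. -/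
/-!
Write `g⁻¹ y ≥ ∑ (θᵢ / g) zⁱ` with `y ∈ P`, `y ≤ x'` and `zⁱ ∈ S` (Carr–Vempala). Splitting the sum
according to whether `zⁱ_ℓ = 0` or `zⁱ_ℓ = 1` gives two partial sums; each is a scaled convex
combination of points of `P`, the first vanishes at `ℓ`, the second equals its own total weight
there, and the two weights add up to `1/g`.
-/

open Finset

section Scaled

variable {E : Type*} [AddCommGroup E] [Module ℝ E]

/-- Membership in the dilation `t • P`, with the convention `0 • P = {0}`. -/
def MemScaled (P : Set E) (t : ℝ) (x : E) : Prop :=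
  (t = 0 ∧ x = 0) ∨ ∃ y ∈ P, x = t • y

theorem MemScaled.smul {P : Set E} {t : ℝ} {x : E} (h : MemScaled P t x) (c : ℝ) :
    MemScaled P (c * t) (c • x) := by
  rcases h with ⟨rfl, rfl⟩ | ⟨y, hy, rfl⟩
  · exact Or.inl ⟨mul_zero c, smul_zero c⟩
  · exact Or.inr ⟨y, hy, smul_smul c t y⟩

theorem Convex.memScaled_sum {P : Set E} (hP : Convex ℝ P) {ι : Type*} {θ : ι → ℝ} {z : ι → E}
    (T : Finset ι) (hθ : ∀ i ∈ T, 0 ≤ θ i) (hz : ∀ i ∈ T, z i ∈ P) :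
    MemScaled P (∑ i ∈ T, θ i) (∑ i ∈ T, θ i • z i) := by
  rcases (sum_nonneg hθ).eq_or_lt with hzero | hpos
  · have hθ0 := (sum_eq_zero_iff_of_nonneg hθ).mp hzero.symm
    exact Or.inl ⟨hzero.symm, sum_eq_zero fun i hi => by rw [hθ0 i hi, zero_smul]⟩
  · refine Or.inr ⟨T.centerMass θ z, hP.centerMass_mem hθ hpos hz, ?_⟩
    rw [centerMass, smul_smul, mul_inv_cancel₀ hpos.ne', one_smul]

end Scaled

theorem stmt12_general {n : ℕ} (S P : Set (Fin n → ℝ)) (g : ℝ) (hg : 1 ≤ g)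
    (hSbin : ∀ z ∈ S, ∀ i, z i = 0 ∨ z i = 1)
    (hPconv : Convex ℝ P)
    (hSP : S ⊆ P)
    (hCV : ∀ x ∈ P, ∃ (k : ℕ) (θ : Fin k → ℝ) (z : Fin k → Fin n → ℝ),
      (∀ i, 0 ≤ θ i) ∧ (∑ i, θ i = 1) ∧ (∀ i, z i ∈ S) ∧
      (∀ j, ∑ i, θ i * z i j ≤ g * x j))
    (x' : Fin n → ℝ) (hx' : ∃ y ∈ P, ∀ j, y j ≤ x' j)
    (ℓ : Fin n) :
    ∃ (lam0 lam1 : ℝ) (x0 x1 : Fin n → ℝ),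
      0 ≤ lam0 ∧ 0 ≤ lam1 ∧
      ((lam0 = 0 ∧ x0 = 0) ∨ ∃ y ∈ P, x0 = lam0 • y) ∧
      ((lam1 = 0 ∧ x1 = 0) ∨ ∃ y ∈ P, x1 = lam1 • y) ∧
      x0 ℓ = 0 ∧ x1 ℓ = lam1 ∧
      (∀ j, x0 j + x1 j ≤ x' j) ∧
      1 / g ≤ lam0 + lam1 := by
  have hg0 : 0 < g := by linarith
  obtain ⟨y, hyP, hyx⟩ := hx'
  obtain ⟨k, θ, z, hθ, hθ1, hzS, hzy⟩ := hCV y hyP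
  have hmem (T : Finset (Fin k)) :
      MemScaled P (g⁻¹ * ∑ i ∈ T, θ i) (g⁻¹ • ∑ i ∈ T, θ i • z i) :=
    (hPconv.memScaled_sum T (fun i _ => hθ i) fun i _ => hSP (hzS i)).smul g⁻¹
  have hnonneg (T : Finset (Fin k)) : 0 ≤ g⁻¹ * ∑ i ∈ T, θ i :=
    mul_nonneg (inv_nonneg.2 hg0.le) (sum_nonneg fun i _ => hθ i)
  refine ⟨_, _, _, _, hnonneg {i | z i ℓ = 0}, hnonneg {i | z i ℓ ≠ 0},
    hmem {i | z i ℓ = 0}, hmem {i | z i ℓ ≠ 0}, ?_, ?_, ?_, ?_⟩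
  · simp only [Pi.smul_apply, Finset.sum_apply, smul_eq_mul]
    rw [sum_eq_zero fun i hi => by rw [(mem_filter.mp hi).2, mul_zero], mul_zero]
  · have hz1 (i : Fin k) (hi : z i ℓ ≠ 0) : z i ℓ = 1 := (hSbin _ (hzS i) ℓ).resolve_left hi
    simp only [Pi.smul_apply, Finset.sum_apply, smul_eq_mul]
    rw [sum_congr rfl fun i hi => by rw [hz1 i (mem_filter.mp hi).2, mul_one]]
  · intro j
    calc _ = g⁻¹ * ∑ i, θ i * z i j := by
          rw [← Pi.add_apply, ← smul_add, sum_filter_add_sum_filter_not]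
          simp only [Pi.smul_apply, Finset.sum_apply, smul_eq_mul]
      _ ≤ g⁻¹ * (g * y j) := by gcongr; exact hzy j
      _ = y j := by field_simp
      _ ≤ x' j := hyx j
  · rw [← mul_add, sum_filter_add_sum_filter_not, hθ1, mul_one, one_div]

/-- The branching LP (maximize `λ₀ + λ₁` subject to `xʲ ∈ λⱼ·P`,
`x⁰_ℓ = 0`, `x¹_ℓ = λ₁`, `x⁰ + x¹ ≤ x'`) has optimal value at least `1/g`: there is a
feasible solution with `λ₀ + λ₁ ≥ 1/g`. -/
theorem stmt12 {n : ℕ} (S P : Set (Fin n → ℝ)) (g : ℝ) (hg : 1 ≤ g)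
    (hSne : S.Nonempty)
    (hSbin : ∀ z ∈ S, ∀ i, z i = 0 ∨ z i = 1)
    (hPconv : Convex ℝ P)
    (hPbox : ∀ x ∈ P, ∀ i, 0 ≤ x i ∧ x i ≤ 1)
    (hSP : S ⊆ P)
    (hCV : ∀ x ∈ P, ∃ (k : ℕ) (θ : Fin k → ℝ) (z : Fin k → Fin n → ℝ),
      (∀ i, 0 ≤ θ i) ∧ (∑ i, θ i = 1) ∧ (∀ i, z i ∈ S) ∧
      (∀ j, ∑ i, θ i * z i j ≤ g * x j))
    (x' : Fin n → ℝ) (hx' : ∃ y ∈ P, ∀ j, y j ≤ x' j)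
    (ℓ : Fin n) (hℓ : x' ℓ < 1) :
    ∃ (lam0 lam1 : ℝ) (x0 x1 : Fin n → ℝ),
      0 ≤ lam0 ∧ 0 ≤ lam1 ∧
      ((lam0 = 0 ∧ x0 = 0) ∨ ∃ y ∈ P, x0 = lam0 • y) ∧
      ((lam1 = 0 ∧ x1 = 0) ∨ ∃ y ∈ P, x1 = lam1 • y) ∧
      x0 ℓ = 0 ∧ x1 ℓ = lam1 ∧
      (∀ j, x0 j + x1 j ≤ x' j) ∧
      1 / g ≤ lam0 + lam1 :=
  stmt12_general S P g hg hSbin hPconv hSP hCV x' hx' ℓ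
end

section
/- Let x be a point of the subtour polytope of G = (V,E) with x_f ≥ 1 for some edge f, and let G' be obtained from G by replacing f with a path P_f of new edges, each assigned value x_f (other coordinates unchanged, giving x'). Then x' lies in the subtour polytope of G'. -/
/-- Membership in the subtour-elimination polytope of a multigraph. -/
def inSubtour {V E : Type*} [Fintype V] [Fintype E] [DecidableEq V]
    (ends : E → V × V) (x : E → ℝ) : Prop :=
  (∀ e, 0 ≤ x e ∧ x e ≤ 2) ∧
  ∀ U : Finset V, U.Nonempty → U ≠ Finset.univ → 2 ≤ ∑ e ∈ cutEdges ends U, x e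

/-- The `j`-th vertex along the path replacing a subdivided edge with endpoints `a`, `b`
and `p` new internal vertices: vertex `0` is `a`, vertices `1,…,p` are the internal
vertices, and all later indices give `b`. -/
def pathNode {V : Type*} (a b : V) (p : ℕ) (j : ℕ) : V ⊕ Fin p :=
  if h : 1 ≤ j ∧ j ≤ p then Sum.inr ⟨j - 1, by omega⟩
  else if j = 0 then Sum.inl a else Sum.inl b

/-- Endpoint map of the graph `G'` obtained from `(V, E, ends)` by replacing the edge `f`
with a path `P_f` of `p + 1` new edges through `p` new internal vertices. -/
def subEnds {V E : Type*} (ends : E → V × V) (f : E) (p : ℕ) :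
    ({e : E // e ≠ f} ⊕ Fin (p + 1)) → (V ⊕ Fin p) × (V ⊕ Fin p)
  | Sum.inl e => (Sum.inl (ends e.1).1, Sum.inl (ends e.1).2)
  | Sum.inr i => (pathNode (ends f).1 (ends f).2 p (i : ℕ),
      pathNode (ends f).1 (ends f).2 p ((i : ℕ) + 1))

/-- The vector `x'` on the edges of the subdivided graph: old edges keep their value,
each path edge gets the value `x f`. -/
def subX {V E : Type*} (f : E) (p : ℕ) (x : E → ℝ) :
    ({e : E // e ≠ f} ⊕ Fin (p + 1)) → ℝ
  | Sum.inl e => x e.1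
  | Sum.inr _ => x f

lemma exists_flip (s : ℕ → Bool) : ∀ n m, m ≤ n → s m ≠ s n →
    ∃ i, m ≤ i ∧ i < n ∧ s i ≠ s (i + 1) := by
  intro n
  induction n with
  | zero =>
    intro m hm hs
    interval_cases m
    exact absurd rfl hs
  | succ k ih =>
    intro m hm hs
    rcases Nat.eq_or_lt_of_le hm with rfl | hlt
    · exact absurd rfl hs
    · have hmk : m ≤ k := Nat.lt_succ_iff.mp hlt
      by_cases h : s k = s (k + 1)
      · obtain ⟨i, h1, h2, h3⟩ := ih m hmk (fun he => hs (he.trans h))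
        exact ⟨i, h1, Nat.lt_succ_of_lt h2, h3⟩
      · exact ⟨k, hmk, Nat.lt_succ_self k, h⟩

/-- subdividing an edge `f` with `x f ≥ 1` into a path, giving each path
edge the value `x f`, preserves membership in the subtour polytope. -/
theorem stmt17 {V E : Type*} [Fintype V] [Fintype E] [DecidableEq V] [DecidableEq E]
    (ends : E → V × V) (x : E → ℝ) (f : E) (p : ℕ)
    (hx : inSubtour ends x) (hf : 1 ≤ x f) :
    inSubtour (subEnds ends f p) (subX (V := V) f p x) := by
  obtain ⟨hbd, hcut⟩ := hx
  constructor
  · rintro (e | i)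
    · exact hbd e.1
    · exact hbd f
  · intro U' hU'ne hU'univ
    set a := (ends f).1 with ha
    set b := (ends f).2 with hb
    set U : Finset V := Finset.univ.filter (fun v => Sum.inl v ∈ U') with hU
    have hmemU : ∀ v : V, v ∈ U ↔ Sum.inl v ∈ U' := by
      intro v; simp [hU]
    set s : ℕ → Bool := fun j => decide (pathNode a b p j ∈ U') with hsdef
    have hnode0 : pathNode a b p 0 = Sum.inl a := by
      unfold pathNode
      rw [dif_neg (by omega), if_pos rfl]
    have hnodep : pathNode a b p (p + 1) = Sum.inl b := by
      unfold pathNode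
      rw [dif_neg (by omega), if_neg (by omega)]
    -- crossing predicate in the old graph
    set crossG : E → Prop :=
      fun e => ((ends e).1 ∈ U ∧ (ends e).2 ∉ U) ∨ ((ends e).1 ∉ U ∧ (ends e).2 ∈ U)
      with hcrossG
    -- split the big sum
    set oldpart : ℝ := ∑ e ∈ Finset.univ.erase f, (if crossG e then x e else 0)
      with holdpart
    set pathpart : ℝ := ∑ i : Fin (p + 1), (if s i ≠ s (i + 1) then x f else 0)
      with hpathpart
    have hsplit : ∑ e ∈ cutEdges (subEnds ends f p) U', subX (V := V) f p x e
        = oldpart + pathpart := by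
      rw [cutEdges, Finset.sum_filter, Fintype.sum_sum_type]
      congr 1
      · rw [holdpart, Finset.sum_subtype (p := fun e => e ≠ f) (Finset.univ.erase f)
          (by intro e; simp [Finset.mem_erase]) (fun e => if crossG e then x e else 0)]
        refine Finset.sum_congr rfl fun e _ => ?_
        have : ((subEnds ends f p (Sum.inl e)).1 ∈ U' ∧ (subEnds ends f p (Sum.inl e)).2 ∉ U') ∨
            ((subEnds ends f p (Sum.inl e)).1 ∉ U' ∧ (subEnds ends f p (Sum.inl e)).2 ∈ U')
            ↔ crossG e.1 := by
          simp only [subEnds, hcrossG, hmemU]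
        rw [if_congr this rfl rfl]
        rfl
      · refine Finset.sum_congr rfl fun i _ => ?_
        have : ((subEnds ends f p (Sum.inr i)).1 ∈ U' ∧ (subEnds ends f p (Sum.inr i)).2 ∉ U') ∨
            ((subEnds ends f p (Sum.inr i)).1 ∉ U' ∧ (subEnds ends f p (Sum.inr i)).2 ∈ U')
            ↔ s i ≠ s (i + 1) := by
          simp only [subEnds, hsdef, ne_eq, decide_eq_decide, ← ha, ← hb]
          tauto
        rw [if_congr this rfl rfl]
        rfl
    rw [hsplit]
    have hpathterm_nonneg : ∀ i : Fin (p + 1), i ∈ Finset.univ →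
        (0 : ℝ) ≤ (if s i ≠ s (i + 1) then x f else 0) := by
      intro i _
      split
      · linarith
      · exact le_refl 0
    have hpp0 : (0 : ℝ) ≤ pathpart := Finset.sum_nonneg hpathterm_nonneg
    -- a single flip gives pathpart ≥ x f
    have hflip_le : ∀ i0 : ℕ, i0 < p + 1 → s i0 ≠ s (i0 + 1) → x f ≤ pathpart := by
      intro i0 hi0 hflip
      have h := Finset.single_le_sum hpathterm_nonneg
        (Finset.mem_univ (⟨i0, hi0⟩ : Fin (p + 1)))
      exact le_trans (le_of_eq (if_pos hflip).symm) h
    by_cases hUne : U.Nonempty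
    · by_cases hUuniv : U = Finset.univ
      · -- U = univ: U' misses an internal vertex; two flips
        have hs0 : s 0 = true := by
          simp only [hsdef, hnode0, decide_eq_true_eq, ← hmemU, hUuniv]
          exact Finset.mem_univ a
        have hsp : s (p + 1) = true := by
          simp only [hsdef, hnodep, decide_eq_true_eq, ← hmemU, hUuniv]
          exact Finset.mem_univ b
        obtain ⟨w, hw⟩ : ∃ w, w ∉ U' := by
          by_contra hc
          push_neg at hc
          exact hU'univ (Finset.eq_univ_iff_forall.mpr hc)
        obtain (v | k) := w
        · exact absurd ((hmemU v).mp (hUuniv ▸ Finset.mem_univ v)) hw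
        · have hk : 1 ≤ (k : ℕ) + 1 ∧ (k : ℕ) + 1 ≤ p := ⟨Nat.le_add_left 1 k, k.2⟩
          have hnodek : pathNode a b p ((k : ℕ) + 1) = Sum.inr k := by
            unfold pathNode
            rw [dif_pos hk]
            exact congrArg Sum.inr (Fin.ext (by simp))
          have hsk : s ((k : ℕ) + 1) = false := by
            simp only [hsdef, hnodek, decide_eq_false_iff_not]
            exact hw
          obtain ⟨i1, _, hi1lt, hflip1⟩ := exists_flip s ((k : ℕ) + 1) 0
            (Nat.zero_le _) (by simp [hs0, hsk])
          obtain ⟨i2, hi2ge, hi2lt, hflip2⟩ := exists_flip s (p + 1) ((k : ℕ) + 1)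
            (by omega) (by simp [hsk, hsp])
          have hne : (⟨i1, by omega⟩ : Fin (p + 1)) ≠ ⟨i2, hi2lt⟩ := by
            simp only [ne_eq, Fin.mk.injEq]
            omega
          have hsub : ({⟨i1, by omega⟩, ⟨i2, hi2lt⟩} : Finset (Fin (p + 1))) ⊆
              Finset.univ := Finset.subset_univ _
          have h2 := Finset.sum_le_sum_of_subset_of_nonneg hsub
            (fun i _ _ => hpathterm_nonneg i (Finset.mem_univ i))
          rw [Finset.sum_pair hne] at h2
          have : (0 : ℝ) ≤ oldpart :=
            Finset.sum_nonneg (fun e _ => by split; exacts [(hbd e).1, le_refl 0])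
          have h2' : x f + x f ≤ pathpart := by
            refine le_trans (le_of_eq ?_) h2
            rw [if_pos hflip1, if_pos hflip2]
          linarith
      · -- U nonempty proper: use the cut bound for U
        have hGcut : 2 ≤ ∑ e ∈ cutEdges ends U, x e := hcut U hUne hUuniv
        have hGsplit : ∑ e ∈ cutEdges ends U, x e
            = (if crossG f then x f else 0) + oldpart := by
          rw [cutEdges, Finset.sum_filter, holdpart]
          exact (Finset.add_sum_erase Finset.univ
            (fun e => if crossG e then x e else 0) (Finset.mem_univ f)).symm
        rw [hGsplit] at hGcut
        by_cases hcf : crossG f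
        · have hs0p : s 0 ≠ s (p + 1) := by
            simp only [hsdef, hnode0, hnodep, ne_eq, decide_eq_decide]
            have h1 := hmemU a
            have h2 := hmemU b
            rcases hcf with ⟨h3, h4⟩ | ⟨h3, h4⟩ <;> tauto
          obtain ⟨i0, _, hi0lt, hflip⟩ := exists_flip s (p + 1) 0 (Nat.zero_le _) hs0p
          have := hflip_le i0 hi0lt hflip
          rw [if_pos hcf] at hGcut
          linarith
        · rw [if_neg hcf] at hGcut
          linarith
    · -- U empty: U' contains only internal vertices; two flips
      rw [Finset.not_nonempty_iff_eq_empty] at hUne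
      have hs0 : s 0 = false := by
        simp only [hsdef, hnode0, decide_eq_false_iff_not, ← hmemU, hUne]
        exact Finset.notMem_empty a
      have hsp : s (p + 1) = false := by
        simp only [hsdef, hnodep, decide_eq_false_iff_not, ← hmemU, hUne]
        exact Finset.notMem_empty b
      obtain ⟨w, hw⟩ := hU'ne
      obtain (v | k) := w
      · exact absurd ((hmemU v).mpr hw) (by rw [hUne]; exact Finset.notMem_empty v)
      · have hk : 1 ≤ (k : ℕ) + 1 ∧ (k : ℕ) + 1 ≤ p := ⟨Nat.le_add_left 1 k, k.2⟩
        have hnodek : pathNode a b p ((k : ℕ) + 1) = Sum.inr k := by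
          unfold pathNode
          rw [dif_pos hk]
          exact congrArg Sum.inr (Fin.ext (by simp))
        have hsk : s ((k : ℕ) + 1) = true := by
          simp only [hsdef, hnodek, decide_eq_true_eq]
          exact hw
        obtain ⟨i1, _, hi1lt, hflip1⟩ := exists_flip s ((k : ℕ) + 1) 0
          (Nat.zero_le _) (by simp [hs0, hsk])
        obtain ⟨i2, hi2ge, hi2lt, hflip2⟩ := exists_flip s (p + 1) ((k : ℕ) + 1)
          (by omega) (by simp [hsk, hsp])
        have hne : (⟨i1, by omega⟩ : Fin (p + 1)) ≠ ⟨i2, hi2lt⟩ := by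
          simp only [ne_eq, Fin.mk.injEq]
          omega
        have hsub : ({⟨i1, by omega⟩, ⟨i2, hi2lt⟩} : Finset (Fin (p + 1))) ⊆
            Finset.univ := Finset.subset_univ _
        have h2 := Finset.sum_le_sum_of_subset_of_nonneg hsub
          (fun i _ _ => hpathterm_nonneg i (Finset.mem_univ i))
        rw [Finset.sum_pair hne] at h2
        have : (0 : ℝ) ≤ oldpart :=
          Finset.sum_nonneg (fun e _ => by split; exacts [(hbd e).1, le_refl 0])
        have h2' : x f + x f ≤ pathpart := by
          refine le_trans (le_of_eq ?_) h2
          rw [if_pos hflip1, if_pos hflip2]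
        linarith
end
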